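/- For |q| < 1, a complex, and nonnegative integer k, if (y;q)_k denotes ∏_{j=0}^{k-1}(1 - y q^j), then for the r-fold product of geometric-type generating functions: the coefficient of x^n in ∏_{i=0}^{r-1} [∑_{k=0}^∞ (a;q)_k (ζ_r^i x)^k / (q;q)_k] equals the coefficient of x^n in ∑_{m=0}^∞ (a^r;q^r)_m x^{rm} / (q^r;q^r)_m, for all |x| < 1. -/

import Mathlib

/-!
Let `F_{q,a}(y) = ∑ (a;q)_k / (q;q)_k y^k`. The recursion of the coefficients gives
`(1 - y) F(y) = (1 - a y) F(q y)`, and since `∏_i (1 - c ζ^i) = 1 - c^r`, both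
`G(x) = ∏_i F_{q,a}(ζ^i x)` and `H(x) = F_{q^r,a^r}(x^r)` satisfy
`(1 - x^r) G(x) = (1 - (a x)^r) G(q x)`, with `G(0) = H(0) = 1`. Iterating this for
`D = G - H` gives `D(x) ∏_{j<n} (1 - (q^j x)^r) = ∏_{j<n} (1 - (a q^j x)^r) D(q^n x)`;
both products converge, the first to a nonzero limit, while `D(q^n x) → D(0) = 0`.
Hence `D(x) = 0`.
-/

open Finset Filter

noncomputable def qp (q x : ℂ) (k : ℕ) : ℂ := ∏ j ∈ Finset.range k, (1 - x * q ^ j)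

noncomputable def qpInf (q x : ℂ) : ℂ := ∏' j : ℕ, (1 - x * q ^ j)

noncomputable def qpz (q x : ℂ) (n : ℤ) : ℂ := qpInf q x / qpInf q (x * q ^ n)

noncomputable def zeta (r : ℕ) : ℂ := Complex.exp (2 * Real.pi * Complex.I / r)

open Topology

section InfiniteProduct

variable {𝕜 : Type*} [NormedField 𝕜] [CompleteSpace 𝕜] {f g k : ℕ → 𝕜}

theorem tendsto_prod_range_of_summable_norm_sub_one (hf : Summable fun n ↦ ‖f n - 1‖) :
    Tendsto (fun n ↦ ∏ j ∈ range n, f j) atTop (𝓝 (∏' j, f j)) := by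
  have : Multipliable fun j ↦ 1 + (f j - 1) := multipliable_one_add_of_summable hf
  simp only [add_sub_cancel] at this
  exact this.tendsto_prod_tprod_nat

theorem tprod_ne_zero_of_summable_norm_sub_one (hf : Summable fun n ↦ ‖f n - 1‖)
    (hf0 : ∀ n, f n ≠ 0) : ∏' j, f j ≠ 0 := by
  simpa using tprod_one_add_ne_zero_of_summable (f := fun j ↦ f j - 1) (by simpa using hf0) hf

theorem eq_zero_of_mul_eq_mul_succ (hf : Summable fun n ↦ ‖f n - 1‖)
    (hg : Summable fun n ↦ ‖g n - 1‖) (hf0 : ∀ n, f n ≠ 0)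
    (hk : ∀ n, f n * k n = g n * k (n + 1)) (hk0 : Tendsto k atTop (𝓝 0)) : k 0 = 0 := by
  have hprod : ∀ n, k 0 * ∏ j ∈ range n, f j = (∏ j ∈ range n, g j) * k n := by
    intro n
    induction n with
    | zero => simp
    | succ n ih =>
      rw [prod_range_succ, prod_range_succ]
      linear_combination f n * ih + (∏ j ∈ range n, g j) * hk n
  have hlim : Tendsto (fun n ↦ k 0 * ∏ j ∈ range n, f j) atTop (𝓝 0) := by
    simpa [hprod] using (tendsto_prod_range_of_summable_norm_sub_one hg).mul hk0
  have := tendsto_nhds_unique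
    ((tendsto_prod_range_of_summable_norm_sub_one hf).const_mul (k 0)) hlim
  exact (mul_eq_zero.1 this).resolve_right (tprod_ne_zero_of_summable_norm_sub_one hf hf0)

end InfiniteProduct

theorem one_sub_ne_zero_of_norm_lt_one {R : Type*} [NormedRing R] [NormOneClass R] {z : R}
    (hz : ‖z‖ < 1) : 1 - z ≠ 0 :=
  sub_ne_zero.2 fun h ↦ by simp [← h] at hz

theorem norm_pow_lt_one {R : Type*} [SeminormedRing R] {z : R} (hz : ‖z‖ < 1) {n : ℕ}
    (hn : n ≠ 0) : ‖z ^ n‖ < 1 :=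
  (norm_pow_le' z (Nat.pos_of_ne_zero hn)).trans_lt (pow_lt_one₀ (norm_nonneg z) hz hn)

theorem norm_mul_lt_one_of_norm_le_one {R : Type*} [SeminormedRing R] {a b : R} (ha : ‖a‖ ≤ 1)
    (hb : ‖b‖ < 1) : ‖a * b‖ < 1 :=
  (norm_mul_le a b).trans_lt (mul_lt_one_of_nonneg_of_lt_one_right ha (norm_nonneg b) hb)

section QPochhammer

variable {q : ℂ}

theorem tendsto_qp (hq : ‖q‖ < 1) (b : ℂ) : Tendsto (qp q b) atTop (𝓝 (qpInf q b)) := by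
  refine tendsto_prod_range_of_summable_norm_sub_one ?_
  simpa using (summable_geometric_of_lt_one (norm_nonneg q) hq).mul_left ‖b‖

theorem qp_self_factor_ne_zero (hq : ‖q‖ < 1) (j : ℕ) : 1 - q * q ^ j ≠ 0 := by
  rw [← pow_succ']
  exact one_sub_ne_zero_of_norm_lt_one (norm_pow_lt_one hq j.succ_ne_zero)

theorem qp_self_ne_zero (hq : ‖q‖ < 1) (k : ℕ) : qp q q k ≠ 0 :=
  prod_ne_zero_iff.2 fun j _ ↦ qp_self_factor_ne_zero hq j

theorem qpInf_self_ne_zero (hq : ‖q‖ < 1) : qpInf q q ≠ 0 := by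
  refine tprod_ne_zero_of_summable_norm_sub_one ?_ (qp_self_factor_ne_zero hq)
  simpa using (summable_geometric_of_lt_one (norm_nonneg q) hq).mul_left ‖q‖

end QPochhammer

noncomputable def qBinomialCoeff (q a : ℂ) (k : ℕ) : ℂ := qp q a k / qp q q k

noncomputable def qBinomialSeries (q a y : ℂ) : ℂ := ∑' k, qBinomialCoeff q a k * y ^ k

section QBinomialSeries

variable {q a y : ℂ}

theorem qBinomialCoeff_zero : qBinomialCoeff q a 0 = 1 := by
  simp [qBinomialCoeff, qp]

theorem qBinomialCoeff_succ_mul (hq : ‖q‖ < 1) (k : ℕ) :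
    qBinomialCoeff q a (k + 1) * (1 - q ^ (k + 1)) = qBinomialCoeff q a k * (1 - a * q ^ k) := by
  have hk := qp_self_ne_zero hq k
  have hk' := qp_self_factor_ne_zero hq k
  simp only [qBinomialCoeff, qp, prod_range_succ]
  rw [pow_succ', div_mul_eq_mul_div, mul_div_mul_right _ _ hk', mul_div_right_comm]

theorem exists_norm_qBinomialCoeff_le (hq : ‖q‖ < 1) :
    ∃ C, ∀ k, ‖qBinomialCoeff q a k‖ ≤ C := by
  have hlim := (tendsto_qp hq a).div (tendsto_qp hq q) (qpInf_self_ne_zero hq)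
  obtain ⟨C, hC⟩ := isBounded_iff_forall_norm_le.1 (Metric.isBounded_range_of_tendsto _ hlim)
  exact ⟨C, fun k ↦ hC _ ⟨k, rfl⟩⟩

theorem summable_qBinomialSeries (hq : ‖q‖ < 1) (hy : ‖y‖ < 1) :
    Summable fun k ↦ qBinomialCoeff q a k * y ^ k := by
  obtain ⟨C, hC⟩ := exists_norm_qBinomialCoeff_le (a := a) hq
  refine .of_norm_bounded ((summable_geometric_of_lt_one (norm_nonneg y) hy).mul_left C)
    fun k ↦ ?_
  rw [norm_mul, norm_pow]
  gcongr
  exact hC k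

theorem qBinomialSeries_zero : qBinomialSeries q a 0 = 1 := by
  rw [qBinomialSeries, tsum_eq_single 0 fun k hk ↦ by simp [hk]]
  simp [qBinomialCoeff_zero]

theorem continuousAt_qBinomialSeries_zero (hq : ‖q‖ < 1) :
    ContinuousAt (qBinomialSeries q a) 0 := by
  obtain ⟨C, hC⟩ := exists_norm_qBinomialCoeff_le (a := a) hq
  have hcont : ContinuousOn (qBinomialSeries q a) (Metric.closedBall 0 (1 / 2)) := by
    refine continuousOn_tsum (fun k ↦ by fun_prop)
      ((summable_geometric_of_lt_one (by norm_num) (by norm_num : (1 / 2 : ℝ) < 1)).mul_left C)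
      fun k y hy ↦ ?_
    rw [norm_mul, norm_pow]
    exact mul_le_mul (hC k) (pow_le_pow_left₀ (norm_nonneg y) (by simpa using hy) k)
      (by positivity) ((norm_nonneg _).trans (hC 0))
  exact hcont.continuousAt (Metric.closedBall_mem_nhds 0 (by norm_num))

theorem one_sub_mul_qBinomialSeries (hq : ‖q‖ < 1) (hy : ‖y‖ < 1) :
    (1 - y) * qBinomialSeries q a y = (1 - a * y) * qBinomialSeries q a (q * y) := by
  have hqy : ‖q * y‖ < 1 := norm_mul_lt_one_of_norm_le_one hq.le hy
  have hF : HasSum (fun k ↦ qBinomialCoeff q a k * y ^ k) (qBinomialSeries q a y) :=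
    (summable_qBinomialSeries hq hy).hasSum
  have hFq : HasSum (fun k ↦ qBinomialCoeff q a k * (q * y) ^ k)
      (qBinomialSeries q a (q * y)) := (summable_qBinomialSeries hq hqy).hasSum
  have hdiff : HasSum (fun k ↦ qBinomialCoeff q a (k + 1) * y ^ (k + 1)
      - qBinomialCoeff q a (k + 1) * (q * y) ^ (k + 1))
      (qBinomialSeries q a y - qBinomialSeries q a (q * y)) := by
    simpa using (hasSum_nat_add_iff' 1).2 (hF.sub hFq)
  have hterm : ∀ k, qBinomialCoeff q a (k + 1) * y ^ (k + 1)
      - qBinomialCoeff q a (k + 1) * (q * y) ^ (k + 1)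
      = y * (qBinomialCoeff q a k * y ^ k - a * (qBinomialCoeff q a k * (q * y) ^ k)) :=
    fun k ↦ by linear_combination y ^ (k + 1) * qBinomialCoeff_succ_mul (a := a) hq k
  simp only [hterm] at hdiff
  linear_combination hdiff.unique ((hF.sub (hFq.mul_left a)).mul_left y)

end QBinomialSeries

theorem IsPrimitiveRoot.prod_one_sub_mul_pow {R : Type*} [CommRing R] [IsDomain R] {ζ : R}
    {r : ℕ} (hζ : IsPrimitiveRoot ζ r) (hr : 0 < r) (c : R) :
    ∏ i ∈ range r, (1 - c * ζ ^ i) = 1 - c ^ r := by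
  have : NeZero r := ⟨hr.ne'⟩
  rw [← one_pow r, hζ.pow_sub_pow_eq_prod_sub_mul 1 c hr, one_pow]
  refine prod_nbij (ζ ^ ·) (fun i _ ↦ ?_) hζ.injOn_pow (fun μ hμ ↦ ?_) fun i _ ↦ by ring
  · rw [Polynomial.mem_nthRootsFinset hr, ← pow_mul, mul_comm, pow_mul, hζ.pow_eq_one, one_pow]
  · rw [mem_coe, Polynomial.mem_nthRootsFinset hr] at hμ
    obtain ⟨i, hi, rfl⟩ := hζ.eq_pow_of_pow_eq_one hμ
    exact ⟨i, mem_range.2 hi, rfl⟩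

section RootOfUnityDissection

variable {q a x ζ : ℂ} {r : ℕ}

theorem one_sub_pow_mul_prod_qBinomialSeries (hq : ‖q‖ < 1) (hζ : IsPrimitiveRoot ζ r)
    (hr : 0 < r) (hx : ‖x‖ < 1) :
    (1 - x ^ r) * ∏ i ∈ range r, qBinomialSeries q a (ζ ^ i * x)
      = (1 - (a * x) ^ r) * ∏ i ∈ range r, qBinomialSeries q a (ζ ^ i * (q * x)) := by
  rw [← hζ.prod_one_sub_mul_pow hr, ← hζ.prod_one_sub_mul_pow hr, ← prod_mul_distrib,
    ← prod_mul_distrib]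
  refine prod_congr rfl fun i _ ↦ ?_
  have hy : ‖ζ ^ i * x‖ < 1 := by
    rwa [norm_mul, norm_pow, hζ.norm'_eq_one hr.ne', one_pow, one_mul]
  rw [mul_left_comm _ q]
  linear_combination one_sub_mul_qBinomialSeries (a := a) hq hy

theorem one_sub_pow_mul_qBinomialSeries_pow (hq : ‖q‖ < 1) (hr : 0 < r) (hx : ‖x‖ < 1) :
    (1 - x ^ r) * qBinomialSeries (q ^ r) (a ^ r) (x ^ r)
      = (1 - (a * x) ^ r) * qBinomialSeries (q ^ r) (a ^ r) ((q * x) ^ r) := by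
  rw [mul_pow, mul_pow]
  exact one_sub_mul_qBinomialSeries (norm_pow_lt_one hq hr.ne') (norm_pow_lt_one hx hr.ne')

theorem prod_qBinomialSeries_eq (hq : ‖q‖ < 1) (hζ : IsPrimitiveRoot ζ r) (hr : 0 < r)
    (hx : ‖x‖ < 1) :
    ∏ i ∈ range r, qBinomialSeries q a (ζ ^ i * x)
      = qBinomialSeries (q ^ r) (a ^ r) (x ^ r) := by
  set D : ℂ → ℂ := fun z ↦
    ∏ i ∈ range r, qBinomialSeries q a (ζ ^ i * z) - qBinomialSeries (q ^ r) (a ^ r) (z ^ r)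
  have hqr : ‖q ^ r‖ < 1 := norm_pow_lt_one hq hr.ne'
  have hnorm : ∀ c : ℂ, ∀ n : ℕ, ‖(q ^ n * c) ^ r‖ = ‖c ^ r‖ * ‖q ^ r‖ ^ n := by
    intro c n
    rw [mul_pow, ← pow_mul, mul_comm n r, pow_mul, norm_mul, norm_pow (q ^ r), mul_comm]
  have hsum : ∀ c : ℂ, Summable fun n : ℕ ↦ ‖(1 - (q ^ n * c) ^ r) - 1‖ := fun c ↦ by
    simpa [hnorm] using (summable_geometric_of_lt_one (norm_nonneg _) hqr).mul_left ‖c ^ r‖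
  have hD0 : Tendsto D (𝓝 0) (𝓝 0) := by
    have hcont : ContinuousAt D 0 := by
      refine ContinuousAt.sub (tendsto_finsetProd _ fun i _ ↦ ?_) ?_
      · exact (continuousAt_qBinomialSeries_zero hq).comp_of_eq (by fun_prop) (mul_zero _)
      · exact (continuousAt_qBinomialSeries_zero hqr).comp_of_eq (by fun_prop) (zero_pow hr.ne')
    simpa [D, zero_pow hr.ne', qBinomialSeries_zero] using hcont.tendsto
  have hseq : Tendsto (fun n : ℕ ↦ q ^ n * x) atTop (𝓝 0) := by
    simpa using (tendsto_pow_atTop_nhds_zero_of_norm_lt_one hq).mul_const x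
  have hqx : ∀ n : ℕ, ‖q ^ n * x‖ < 1 := fun n ↦
    norm_mul_lt_one_of_norm_le_one (by rw [norm_pow]; exact pow_le_one₀ (norm_nonneg q) hq.le)
      hx
  have := eq_zero_of_mul_eq_mul_succ (hsum x) (hsum (a * x)) (fun n ↦ ?_) (fun n ↦ ?_)
    (hD0.comp hseq)
  · simpa [D, sub_eq_zero] using this
  · exact one_sub_ne_zero_of_norm_lt_one (norm_pow_lt_one (hqx n) hr.ne')
  · simp only [D, Function.comp_apply]
    rw [pow_succ', mul_assoc, mul_left_comm (q ^ n) a x]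
    linear_combination one_sub_pow_mul_prod_qBinomialSeries (a := a) hq hζ hr (hqx n)
      - one_sub_pow_mul_qBinomialSeries_pow (a := a) hq hr (hqx n)

end RootOfUnityDissection

theorem stmt18 (q a : ℂ) (hq : ‖q‖ < 1) (r : ℕ) (hr : 2 ≤ r)
    (x : ℂ) (hx : ‖x‖ < 1) :
    ∏ i ∈ Finset.range r, (∑' k : ℕ, qp q a k / qp q q k * (zeta r ^ i * x) ^ k)
      = ∑' m : ℕ, qp (q ^ r) (a ^ r) m / qp (q ^ r) (q ^ r) m * x ^ (r * m) := by
  have hr0 : 0 < r := by omega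
  simp only [pow_mul]
  exact prod_qBinomialSeries_eq hq (Complex.isPrimitiveRoot_exp r hr0.ne') hr0 hx
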